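/- arXiv:2506.17862 — 16 statements merged into one kernel-verified Lean document; each statement's English description precedes it below -/
import Mathlib

section
/- For every integer n ≥ 1, the bivariate polynomial P_n(X,Y) = ∑_{k=0}^{n} [C(n,k)·C(2n+1+k, n+1+k)/(2n+1+k)]·X^{n-k}·Y^{k}, with coefficients in ℚ, is divisible by the linear polynomial X + Y in ℚ[X,Y]. -/
open Finset MvPolynomial
open scoped fwdDiff

/-- The iterated forward difference of `x ↦ C(x, n-1)` of order `n ≥ 1` vanishes. -/
lemma aux_fwd (n : ℕ) (hn : 1 ≤ n) :
    (fwdDiff (1 : ℕ))^[n] (fun x ↦ (x.choose (n - 1) : ℤ) : ℕ → ℤ) = fun _ ↦ 0 := by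
  obtain ⟨m, rfl⟩ : ∃ m, n = m + 1 := ⟨n - 1, by omega⟩
  have h1 : (fwdDiff (1 : ℕ))^[m] (fun x ↦ (x.choose (m + 1 - 1) : ℤ) : ℕ → ℤ)
      = fun x ↦ (x.choose 0 : ℤ) := by
    simpa using fwdDiff_iter_choose 0 m
  funext y
  rw [Function.iterate_succ_apply', h1]
  simp [fwdDiff]

/-- Alternating binomial sum identity. -/
lemma aux_alt (n : ℕ) (hn : 1 ≤ n) :
    ∑ k ∈ Finset.range (n + 1),
      ((-1 : ℤ) ^ (n - k) * n.choose k) * ((2 * n + k).choose (n - 1) : ℤ) = 0 := by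
  have := fwdDiff_iter_eq_sum_shift (1 : ℕ) (fun x ↦ (x.choose (n - 1) : ℤ)) n (2 * n)
  rw [aux_fwd n hn] at this
  simpa using this.symm

/-- Alternating binomial sum identity in ℚ with `(-1)^k`. -/
lemma aux_alt' (n : ℕ) (hn : 1 ≤ n) :
    ∑ k ∈ Finset.range (n + 1),
      ((-1 : ℚ) ^ k * n.choose k) * ((2 * n + k).choose (n - 1) : ℚ) = 0 := by
  have h := aux_alt n hn
  have h2 : ((∑ k ∈ Finset.range (n + 1),
      ((-1 : ℤ) ^ (n - k) * n.choose k) * ((2 * n + k).choose (n - 1) : ℤ) : ℤ) : ℚ) = 0 := by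
    rw [h]; norm_num
  push_cast at h2
  have h3 : ∑ k ∈ Finset.range (n + 1),
      ((-1 : ℚ) ^ k * n.choose k) * ((2 * n + k).choose (n - 1) : ℚ)
      = (-1 : ℚ) ^ n * ∑ k ∈ Finset.range (n + 1),
        ((-1 : ℚ) ^ (n - k) * n.choose k) * ((2 * n + k).choose (n - 1) : ℚ) := by
    rw [Finset.mul_sum]
    refine Finset.sum_congr rfl fun k hk => ?_
    have hkn : k ≤ n := by simpa using Nat.lt_succ_iff.mp (Finset.mem_range.mp hk)
    have : (-1 : ℚ) ^ n = (-1 : ℚ) ^ (n - k) * (-1 : ℚ) ^ k := by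
      rw [← pow_add]; congr 1; omega
    have hsq : ((-1 : ℚ) ^ (n - k)) * ((-1 : ℚ) ^ (n - k)) = 1 := by
      rw [← pow_add, ← two_mul, pow_mul]; norm_num
    rw [this]
    linear_combination (-((-1 : ℚ) ^ k * (n.choose k : ℚ)
      * ((2 * n + k).choose (n - 1) : ℚ))) * hsq
  rw [h3, h2, mul_zero]

/-- The coefficient identity. -/
lemma aux_coef (n k : ℕ) (hn : 1 ≤ n) :
    ((2 * n + 1 + k).choose (n + 1 + k) : ℚ) / (2 * n + 1 + k)
      = ((2 * n + k).choose (n - 1) : ℚ) / n := by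
  have hnat : (2 * n + k).choose (n + 1 + k) * (2 * n + k + 1)
      = (2 * n + k + 1).choose (n + 1 + k) * (2 * n + k + 1 - (n + 1 + k)) :=
    Nat.choose_mul_succ_eq (2 * n + k) (n + 1 + k)
  have hsub : 2 * n + k + 1 - (n + 1 + k) = n := by omega
  have hsymm : (2 * n + k).choose (n - 1) = (2 * n + k).choose (n + 1 + k) := by
    have hle : n + 1 + k ≤ 2 * n + k := by omega
    have := Nat.choose_symm hle
    have hsub2 : 2 * n + k - (n + 1 + k) = n - 1 := by omega
    rw [hsub2] at this
    exact this
  rw [hsymm]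
  have key : ((2 * n + 1 + k).choose (n + 1 + k) : ℚ) * n
      = ((2 * n + k).choose (n + 1 + k) : ℚ) * (2 * n + 1 + k) := by
    have : (2 * n + 1 + k).choose (n + 1 + k) * n
        = (2 * n + k).choose (n + 1 + k) * (2 * n + 1 + k) := by
      rw [hsub] at hnat
      have e1 : 2 * n + 1 + k = 2 * n + k + 1 := by omega
      rw [e1]
      omega
    exact_mod_cast congrArg (Nat.cast : ℕ → ℚ) this
  have hd1 : (2 * n + 1 + k : ℚ) ≠ 0 := by positivity
  have hd2 : (n : ℚ) ≠ 0 := Nat.cast_ne_zero.mpr (by omega)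
  field_simp
  linarith [key]

/-- For every integer `n ≥ 1`, the bivariate polynomial
`P_n(X,Y) = ∑_{k=0}^{n} [C(n,k)·C(2n+1+k, n+1+k)/(2n+1+k)]·X^{n-k}·Y^k`
with coefficients in `ℚ` is divisible by `X + Y` in `ℚ[X,Y]`. -/
theorem stmt_0 (n : ℕ) (hn : 1 ≤ n) :
    (X 0 + X 1 : MvPolynomial (Fin 2) ℚ) ∣
      ∑ k ∈ Finset.range (n + 1),
        C ((n.choose k : ℚ) * ((2 * n + 1 + k).choose (n + 1 + k) : ℚ) / (2 * n + 1 + k)) *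
          X 0 ^ (n - k) * X 1 ^ k := by
  set c : ℕ → ℚ := fun k =>
    (n.choose k : ℚ) * ((2 * n + 1 + k).choose (n + 1 + k) : ℚ) / (2 * n + 1 + k) with hc
  -- the alternating sum of coefficients vanishes
  have halt : ∑ k ∈ Finset.range (n + 1), (-1 : ℚ) ^ k * c k = 0 := by
    have : ∀ k, c k = (n.choose k : ℚ) * (((2 * n + k).choose (n - 1) : ℚ) / n) := by
      intro k
      rw [hc]
      simp only
      rw [mul_div_assoc, aux_coef n k hn]
    calc ∑ k ∈ Finset.range (n + 1), (-1 : ℚ) ^ k * c k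
        = (∑ k ∈ Finset.range (n + 1),
            ((-1 : ℚ) ^ k * n.choose k) * ((2 * n + k).choose (n - 1) : ℚ)) / n := by
          rw [Finset.sum_div]
          refine Finset.sum_congr rfl fun k _ => ?_
          rw [this k]; ring
      _ = 0 := by rw [aux_alt' n hn]; simp
  -- split the polynomial
  have hsplit : ∑ k ∈ Finset.range (n + 1), C (c k) * X 0 ^ (n - k) * X 1 ^ k
      = (∑ k ∈ Finset.range (n + 1),
          C (c k) * X 0 ^ (n - k) * (X 1 ^ k - (- X 0) ^ k))
        + C (∑ k ∈ Finset.range (n + 1), (-1 : ℚ) ^ k * c k)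
          * (X 0 : MvPolynomial (Fin 2) ℚ) ^ n := by
    rw [map_sum, Finset.sum_mul, ← Finset.sum_add_distrib]
    refine Finset.sum_congr rfl fun k hk => ?_
    have hkn : k ≤ n := Nat.lt_succ_iff.mp (Finset.mem_range.mp hk)
    have hpow : (X 0 : MvPolynomial (Fin 2) ℚ) ^ (n - k) * X 0 ^ k = X 0 ^ n := by
      rw [← pow_add]; congr 1; omega
    have hneg : ((- X 0 : MvPolynomial (Fin 2) ℚ)) ^ k = C ((-1 : ℚ) ^ k) * X 0 ^ k := by
      rw [neg_pow]
      congr 1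
      rw [map_pow, map_neg, map_one]
    rw [hneg, map_mul, mul_sub, ← hpow]
    ring
  rw [hsplit, halt, map_zero, zero_mul, add_zero]
  refine Finset.dvd_sum fun k _ => ?_
  have : (X 0 + X 1 : MvPolynomial (Fin 2) ℚ) ∣ X 1 ^ k - (- X 0) ^ k := by
    have := sub_dvd_pow_sub_pow (X 1 : MvPolynomial (Fin 2) ℚ) (- X 0) k
    rwa [sub_neg_eq_add, add_comm] at this
  exact Dvd.dvd.mul_left this _
end

section
/- For every integer n ≥ 1, the alternating sum ∑_{k=0}^{n} (−1)^k · C(n,k) · C(2n+1+k, n+1+k)/(2n+1+k) equals 0 (as a rational number). -/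
/-!
By symmetry and `(N + 1) C(N, j) = (j + 1) C(N + 1, j + 1)`, the `k`-th summand is
`(-1)^k C(n, k) C(2n + k, n - 1) / n`. As a function of `k`, `C(2n + k, n - 1)` is a polynomial
of degree `n - 1`, so its `n`-th forward difference, which is the alternating sum up to sign,
vanishes.
-/

open Finset fwdDiff

theorem fwdDiff_iter_choose_eq_zero {m n : ℕ} (h : m < n) :
    (Δ_[1])^[n] (fun x ↦ x.choose m : ℕ → ℤ) = 0 := by
  obtain ⟨j, rfl⟩ := Nat.exists_eq_add_of_lt h
  rw [show m + j + 1 = j + 1 + m by ring, Function.iterate_add_apply,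
    (add_zero m ▸ fwdDiff_iter_choose 0 m :), Function.iterate_succ_apply]
  ext x
  simp [fwdDiff_iter_eq_sum_shift]

theorem neg_one_pow_mul_neg_one_pow_of_le {R : Type*} [Ring R] {n k : ℕ} (h : k ≤ n) :
    (-1 : R) ^ n * (-1) ^ k = (-1) ^ (n - k) := by
  rw [← Nat.sub_add_cancel h, pow_add, mul_assoc, ← pow_add, ← two_mul, pow_mul]
  simp

theorem alternating_sum_choose_mul_choose_add_eq_zero {m n : ℕ} (h : m < n) (a : ℕ) :
    ∑ k ∈ range (n + 1), (-1 : ℤ) ^ k * n.choose k * (a + k).choose m = 0 := by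
  have hΔ := congr_fun (fwdDiff_iter_choose_eq_zero h) a
  rw [fwdDiff_iter_eq_sum_shift, Pi.zero_apply] at hΔ
  rw [← mul_right_inj' (pow_ne_zero n (neg_ne_zero.mpr one_ne_zero)), mul_zero, ← hΔ, mul_sum]
  refine sum_congr rfl fun k hk ↦ ?_
  rw [smul_eq_mul, smul_eq_mul, mul_one, ← mul_assoc, ← mul_assoc,
    neg_one_pow_mul_neg_one_pow_of_le (Nat.lt_succ_iff.mp (mem_range.mp hk))]

theorem Nat.cast_choose_succ_succ_div {K : Type*} [Field K] [CharZero K] (N j : ℕ) :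
    ((N + 1).choose (j + 1) : K) / (N + 1) = N.choose j / (j + 1) := by
  rw [div_eq_div_iff (Nat.cast_add_one_ne_zero N) (Nat.cast_add_one_ne_zero j),
    mul_comm _ ((N : K) + 1)]
  exact_mod_cast (Nat.add_one_mul_choose_eq N j).symm

/-- For every integer `n ≥ 1`, the alternating sum
`∑_{k=0}^{n} (−1)^k · C(n,k) · C(2n+1+k, n+1+k)/(2n+1+k)` equals `0` in `ℚ`. -/
theorem stmt_1 (n : ℕ) (hn : 1 ≤ n) :
    ∑ k ∈ Finset.range (n + 1),
      (-1 : ℚ) ^ k * (n.choose k : ℚ) * ((2 * n + 1 + k).choose (n + 1 + k) : ℚ) /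
        (2 * n + 1 + k) = 0 := by
  obtain ⟨m, rfl⟩ := Nat.exists_eq_add_of_le' hn
  have hterm (k : ℕ) :
      ((2 * (m + 1) + 1 + k).choose (m + 1 + 1 + k) : ℚ) / (2 * (m + 1) + 1 + k) =
        (2 * (m + 1) + k).choose m / (m + 1) := by
    rw [Nat.choose_symm_of_eq_add (by ring : 2 * (m + 1) + 1 + k = m + 1 + 1 + k + (m + 1)),
      show 2 * (m + 1) + 1 + k = 2 * (m + 1) + k + 1 by ring]
    convert Nat.cast_choose_succ_succ_div (K := ℚ) (2 * (m + 1) + k) m using 2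
    push_cast
    ring
  have hsum := alternating_sum_choose_mul_choose_add_eq_zero (lt_add_one m) (2 * (m + 1))
  push_cast
  simp_rw [mul_div_assoc, hterm, ← mul_div_assoc, ← sum_div]
  exact div_eq_zero_iff.mpr (.inl (by exact_mod_cast hsum))
end

section
/- Let n ≥ 1 and let F(n,k) = (−1)^k · C(n,k) · C(2n+1+k, n+1+k)/(2n+1+k) and H(n,k) = −F(n,k) · k·(n+1+k)/(n·(2n+1)), both rational numbers. Then for every natural number k, F(n,k) = H(n,k+1) − H(n,k). -/
/-- The Wilf–Zeilberger certificate identity: with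
`F(n,k) = (−1)^k · C(n,k) · C(2n+1+k, n+1+k)/(2n+1+k)` and
`H(n,k) = −F(n,k) · k·(n+1+k)/(n·(2n+1))`, we have `F(n,k) = H(n,k+1) − H(n,k)`
for all natural numbers `k` and integers `n ≥ 1`. -/
theorem stmt_2 (n : ℕ) (hn : 1 ≤ n) (k : ℕ)
    (F H : ℕ → ℚ)
    (hF : ∀ j : ℕ, F j = (-1 : ℚ) ^ j * (n.choose j : ℚ) *
        ((2 * n + 1 + j).choose (n + 1 + j) : ℚ) / (2 * n + 1 + j))
    (hH : ∀ j : ℕ, H j = -F j * ((j : ℚ) * (n + 1 + j)) / ((n : ℚ) * (2 * n + 1))) :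
    F k = H (k + 1) - H k := by
  have hn0 : (n : ℚ) ≠ 0 := Nat.cast_ne_zero.mpr (by omega)
  rcases le_or_gt k n with hk | hk
  · -- main case
    have h1 : ((n.choose (k+1) : ℚ)) * (k+1) = (n.choose k : ℚ) * ((n:ℚ) - k) := by
      have := Nat.choose_succ_right_eq n k
      have hc : ((n - k : ℕ) : ℚ) = (n : ℚ) - k := by
        push_cast [Nat.cast_sub hk]; ring
      calc ((n.choose (k+1) : ℚ)) * (k+1)
          = ((n.choose (k+1) * (k+1) : ℕ) : ℚ) := by push_cast; ring
        _ = ((n.choose k * (n - k) : ℕ) : ℚ) := by rw [this]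
        _ = (n.choose k : ℚ) * ((n:ℚ) - k) := by push_cast [Nat.cast_sub hk]; ring
    have h2 : (((2*n+1+k+1).choose (n+1+k+1) : ℚ)) * ((n:ℚ)+2+k)
        = ((2*n:ℚ)+2+k) * ((2*n+1+k).choose (n+1+k) : ℚ) := by
      have := Nat.add_one_mul_choose_eq (2*n+1+k) (n+1+k)
      have : ((2*n+1+k+1) * (2*n+1+k).choose (n+1+k) : ℕ)
          = (2*n+1+k+1).choose (n+1+k+1) * (n+1+k+1) := by
        simpa [Nat.succ_eq_add_one] using this
      have hq : (((2*n+1+k+1) * (2*n+1+k).choose (n+1+k) : ℕ) : ℚ)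
          = (((2*n+1+k+1).choose (n+1+k+1) * (n+1+k+1) : ℕ) : ℚ) := by
        exact_mod_cast congrArg (Nat.cast : ℕ → ℚ) this
      push_cast at hq
      linarith [hq]
    simp only [hH, hF]
    have e1 : ((2 * n + 1 + (k+1) : ℕ).choose (n + 1 + (k+1)) : ℚ)
        = ((2*n+1+k+1).choose (n+1+k+1) : ℚ) := by norm_num [Nat.add_assoc]
    have d1 : ((n:ℚ) * (2*n+1)) ≠ 0 := by positivity
    have d2 : ((2*n:ℚ)+1+k) ≠ 0 := by positivity
    have d3 : ((2*n:ℚ)+1+(k+1:ℕ)) ≠ 0 := by push_cast; positivity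
    have d4 : ((k:ℚ)+1) ≠ 0 := by positivity
    have d5 : ((n:ℚ)+2+k) ≠ 0 := by positivity
    rw [e1]
    have hcn : (n.choose (k+1) : ℚ) = (n.choose k : ℚ) * ((n:ℚ) - k) / ((k:ℚ)+1) := by
      field_simp at h1 ⊢; linarith [h1]
    have hcb : ((2*n+1+k+1).choose (n+1+k+1) : ℚ)
        = ((2*n:ℚ)+2+k) * ((2*n+1+k).choose (n+1+k) : ℚ) / ((n:ℚ)+2+k) := by
      field_simp at h2 ⊢; linarith [h2]
    rw [hcn, hcb]
    push_cast
    field_simp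
    ring
  · -- k > n : all choose n j vanish
    have c1 : n.choose k = 0 := Nat.choose_eq_zero_of_lt hk
    have c2 : n.choose (k+1) = 0 := Nat.choose_eq_zero_of_lt (lt_trans hk (Nat.lt_succ_self k))
    simp only [hH, hF, c1, c2]
    simp
end

section
/- For all integers n ≥ 1 and 0 ≤ i ≤ n−1, the partial alternating sum ∑_{j=0}^{i} (−1)^{i−j} · C(n,j) · C(2n+1+j, n+1+j)/(2n+1+j) equals (1/(2n+1)) · C(n−1, i) · C(2n+1+i, n+1+i). -/
/-!
The alternating partial sums `q i = ∑_{j ≤ i} (-1)^(i-j) a j` are characterised by `q 0 = a 0` and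
`q (i+1) + q i = a (i+1)`, so it suffices to check this recurrence for the closed form. For
`n = m + 1`, after clearing denominators with
`(2n+2+i) C(2n+1+i, n+1+i) = (n+2+i) C(2n+2+i, n+2+i)`, the recurrence is a linear combination of
Pascal's rule and `(m+1) C(m,i) = (i+1) C(m+1,i+1)`.
-/

open Finset

theorem sum_range_neg_one_pow_mul_eq {R : Type*} [CommRing R] {a q : ℕ → R}
    (h0 : q 0 = a 0) (hsucc : ∀ i, q (i + 1) + q i = a (i + 1)) (i : ℕ) :
    ∑ j ∈ range (i + 1), (-1) ^ (i - j) * a j = q i := by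
  induction i with
  | zero => simp [h0]
  | succ i ih =>
    have hflip : ∑ j ∈ range (i + 1), (-1) ^ (i + 1 - j) * a j
        = -∑ j ∈ range (i + 1), (-1) ^ (i - j) * a j := by
      rw [← sum_neg_distrib]
      refine sum_congr rfl fun j hj => ?_
      rw [Nat.sub_add_comm (Nat.lt_succ_iff.mp (mem_range.mp hj)), pow_succ]
      ring
    rw [sum_range_succ, hflip, ih, ← hsucc, Nat.sub_self, pow_zero, one_mul]
    ring

/-- The coefficient of `X^{n-k} Y^k` in `P_n(X,Y)`. -/
def coeffP (n k : ℕ) : ℚ :=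
  (n.choose k : ℚ) * ((2 * n + 1 + k).choose (n + 1 + k) : ℚ) / (2 * n + 1 + k)

/-- The claimed coefficient of `X^{n-1-i} Y^i` in `P_n(X,Y) / (X + Y)`. -/
def coeffQuot (n i : ℕ) : ℚ :=
  1 / (2 * n + 1) * ((n - 1).choose i : ℚ) * ((2 * n + 1 + i).choose (n + 1 + i) : ℚ)

theorem coeffQuot_zero (n : ℕ) : coeffQuot n 0 = coeffP n 0 := by
  simp [coeffQuot, coeffP, div_eq_inv_mul]

theorem coeffQuot_succ_add_coeffQuot {n : ℕ} (hn : 1 ≤ n) (i : ℕ) :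
    coeffQuot n (i + 1) + coeffQuot n i = coeffP n (i + 1) := by
  obtain ⟨m, rfl⟩ := Nat.exists_eq_add_of_le' hn
  have pascal : ((m + 1).choose (i + 1) : ℚ) = m.choose i + m.choose (i + 1) := by
    exact_mod_cast Nat.choose_succ_succ m i
  have absorbSmall : ((m + 1 : ℕ) : ℚ) * m.choose i = (m + 1).choose (i + 1) * (i + 1 : ℕ) := by
    exact_mod_cast Nat.add_one_mul_choose_eq m i
  have absorbLarge : ((2 * (m + 1) + 1 + i + 1 : ℕ) : ℚ) * (2 * (m + 1) + 1 + i).choose (m + 1 + 1 + i)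
      = (2 * (m + 1) + 1 + i + 1).choose (m + 1 + 1 + i + 1) * (m + 1 + 1 + i + 1 : ℕ) := by
    exact_mod_cast Nat.add_one_mul_choose_eq (2 * (m + 1) + 1 + i) (m + 1 + 1 + i)
  rw [pascal] at absorbSmall
  simp only [coeffQuot, coeffP, Nat.add_sub_cancel, pascal]
  push_cast at absorbSmall absorbLarge ⊢
  field_simp
  linear_combination (m.choose i : ℚ) * absorbLarge
    - ((2 * (m + 1) + 1 + i + 1).choose (m + 1 + 1 + i + 1) : ℚ) * absorbSmall

theorem stmt_3_general (n i : ℕ) (hn : 1 ≤ n) :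
    ∑ j ∈ Finset.range (i + 1),
      (-1 : ℚ) ^ (i - j) * (n.choose j : ℚ) * ((2 * n + 1 + j).choose (n + 1 + j) : ℚ) /
        (2 * n + 1 + j)
      = 1 / (2 * n + 1) * ((n - 1).choose i : ℚ) *
          ((2 * n + 1 + i).choose (n + 1 + i) : ℚ) := by
  calc _ = ∑ j ∈ range (i + 1), (-1 : ℚ) ^ (i - j) * coeffP n j :=
        sum_congr rfl fun j _ => by rw [coeffP]; ring
    _ = coeffQuot n i :=
        sum_range_neg_one_pow_mul_eq (coeffQuot_zero n) (coeffQuot_succ_add_coeffQuot hn) i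

/-- For integers `n ≥ 1` and `0 ≤ i ≤ n−1`, the partial alternating sum
`∑_{j=0}^{i} (−1)^{i−j} · C(n,j) · C(2n+1+j, n+1+j)/(2n+1+j)` equals
`(1/(2n+1)) · C(n−1, i) · C(2n+1+i, n+1+i)`. -/
theorem stmt_3 (n i : ℕ) (hn : 1 ≤ n) (hi : i ≤ n - 1) :
    ∑ j ∈ Finset.range (i + 1),
      (-1 : ℚ) ^ (i - j) * (n.choose j : ℚ) * ((2 * n + 1 + j).choose (n + 1 + j) : ℚ) /
        (2 * n + 1 + j)
      = 1 / (2 * n + 1) * ((n - 1).choose i : ℚ) *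
          ((2 * n + 1 + i).choose (n + 1 + i) : ℚ) :=
  stmt_3_general n i hn
end

section
/- For all non-negative integers m1, m2, setting n = m1 + m2 + 1, the rational number (1/(2n+1)) · C(n−1, m2) · C(2n+1+m2, n+1+m2) equals (2m1+3m2+3)! / [ (2m1+2m2+3) · (m1+m2+1) · (m1+2m2+2)! · m1! · m2! ]. -/
open Nat

/-- Wildberger–Rubine's first Geode conjecture (Theorem 1.1): for non-negative
integers `m1, m2`, with `n = m1 + m2 + 1`,
`(1/(2n+1)) · C(n−1, m2) · C(2n+1+m2, n+1+m2)`
equals `(2m1+3m2+3)! / [(2m1+2m2+3)·(m1+m2+1)·(m1+2m2+2)!·m1!·m2!]`. -/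
theorem stmt_4 (m1 m2 : ℕ) :
    (1 : ℚ) / (2 * (m1 + m2 + 1) + 1) * (((m1 + m2 + 1) - 1).choose m2 : ℚ) *
        ((2 * (m1 + m2 + 1) + 1 + m2).choose ((m1 + m2 + 1) + 1 + m2) : ℚ)
      = ((2 * m1 + 3 * m2 + 3)! : ℚ) /
          ((2 * m1 + 2 * m2 + 3) * (m1 + m2 + 1) * ((m1 + 2 * m2 + 2)! : ℚ) *
            (m1 ! : ℚ) * (m2 ! : ℚ)) := by
  have e1 : (m1 + m2 + 1) - 1 = m1 + m2 := by omega
  have e2 : 2 * (m1 + m2 + 1) + 1 + m2 = 2 * m1 + 3 * m2 + 3 := by omega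
  have e3 : (m1 + m2 + 1) + 1 + m2 = m1 + 2 * m2 + 2 := by omega
  rw [e1, e2, e3]
  have h1 : ((m1 + m2).choose m2 : ℚ) = (m1 + m2)! / (m2 ! * m1 !) := by
    rw [Nat.cast_choose ℚ (by omega : m2 ≤ m1 + m2),
      show m1 + m2 - m2 = m1 from by omega]
  have h2 : ((2 * m1 + 3 * m2 + 3).choose (m1 + 2 * m2 + 2) : ℚ)
      = (2 * m1 + 3 * m2 + 3)! / ((m1 + 2 * m2 + 2)! * (m1 + m2 + 1)!) := by
    rw [Nat.cast_choose ℚ (by omega : m1 + 2 * m2 + 2 ≤ 2 * m1 + 3 * m2 + 3),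
      show 2 * m1 + 3 * m2 + 3 - (m1 + 2 * m2 + 2) = m1 + m2 + 1 from by omega]
  have h3 : ((m1 + m2 + 1)! : ℚ) = (m1 + m2 + 1) * (m1 + m2)! := by
    rw [Nat.factorial_succ]; push_cast; ring
  have p1 : ((m1 + m2)! : ℚ) ≠ 0 := by positivity
  have p2 : ((m1 + 2 * m2 + 2)! : ℚ) ≠ 0 := by positivity
  have p3 : (m1 ! : ℚ) ≠ 0 := by positivity
  have p4 : (m2 ! : ℚ) ≠ 0 := by positivity
  rw [h1, h2, h3]
  have q : ((m1 : ℚ) + m2 + 1) ≠ 0 := by positivity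
  field_simp
  ring
end

section
/- For all integers a ≥ 1 and n ≥ 1, the bivariate polynomial P_n(X,Y) = ∑_{k=0}^{n} [C(n,k)·C(an+1+k, (a−1)n+1+k)/(an+1+k)]·X^{n−k}·Y^{k}, with coefficients in ℚ, is divisible by X + Y in ℚ[X,Y]. -/
open Finset MvPolynomial

lemma key_alt (a n : ℕ) (hn : 1 ≤ n) :
    ∑ k ∈ Finset.range (n + 1),
      (-1 : ℚ) ^ k * (n.choose k : ℚ) * ((a * n + k).choose (n - 1) : ℚ) = 0 := by
  have hX : (Polynomial.X : Polynomial ℚ) ^ n =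
      ∑ k ∈ Finset.range (n + 1),
        (Polynomial.X + 1) ^ k * (-1 : Polynomial ℚ) ^ (n - k) * (n.choose k : Polynomial ℚ) := by
    have h := add_pow (Polynomial.X + 1 : Polynomial ℚ) (-1) n
    simp only [add_neg_cancel_right] at h
    exact h
  have h2 : (Polynomial.X : Polynomial ℚ) ^ n * (Polynomial.X + 1) ^ (a * n) =
      ∑ k ∈ Finset.range (n + 1),
        Polynomial.C ((-1 : ℚ) ^ (n - k) * (n.choose k : ℚ)) *
          (Polynomial.X + 1) ^ (a * n + k) := by
    rw [hX, Finset.sum_mul]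
    refine Finset.sum_congr rfl fun k _ => ?_
    rw [pow_add]
    simp only [map_mul, map_pow, map_neg, map_one, Polynomial.C_eq_natCast]
    ring
  have h3 := congrArg (fun p => Polynomial.coeff p (n - 1)) h2
  simp only [Polynomial.coeff_X_pow_mul', Polynomial.finset_sum_coeff,
    Polynomial.coeff_C_mul, Polynomial.coeff_X_add_one_pow,
    if_neg (by omega : ¬ n ≤ n - 1)] at h3
  -- h3 : 0 = ∑ k, (-1)^(n-k) * choose n k * choose (a*n+k) (n-1)
  have h4 : ∀ k ∈ Finset.range (n + 1),
      (-1 : ℚ) ^ k * (n.choose k : ℚ) * ((a * n + k).choose (n - 1) : ℚ) =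
      (-1 : ℚ) ^ n * ((-1 : ℚ) ^ (n - k) * (n.choose k : ℚ) * ((a * n + k).choose (n - 1) : ℚ)) := by
    intro k hk
    have hk' : k ≤ n := by simpa using Nat.lt_succ_iff.mp (Finset.mem_range.mp hk)
    have h5 : (-1 : ℚ) ^ (n - k) * (-1 : ℚ) ^ k = (-1 : ℚ) ^ n := by
      rw [← pow_add, Nat.sub_add_cancel hk']
    have h6 : ((-1 : ℚ) ^ (n - k)) * ((-1 : ℚ) ^ (n - k)) = 1 := by
      rw [← pow_add, ← two_mul, pow_mul]
      norm_num
    have : (-1 : ℚ) ^ k = (-1 : ℚ) ^ n * (-1 : ℚ) ^ (n - k) := by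
      linear_combination ((-1:ℚ)^(n-k)) * h5 + (-(-1:ℚ)^k) * h6
    rw [this]; ring
  rw [Finset.sum_congr rfl h4, ← Finset.mul_sum]
  have : ∑ k ∈ Finset.range (n + 1),
      (-1 : ℚ) ^ (n - k) * (n.choose k : ℚ) * ((a * n + k).choose (n - 1) : ℚ) = 0 := by
    rw [← h3]
  rw [show ∑ k ∈ Finset.range (n + 1), ((-1:ℚ)^(n-k) * (n.choose k : ℚ) * ((a*n+k).choose (n-1) : ℚ)) = 0 from this]
  ring

lemma alt_coeff (a n : ℕ) (ha : 1 ≤ a) (hn : 1 ≤ n) :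
    ∑ k ∈ Finset.range (n + 1),
      (-1 : ℚ) ^ k * ((n.choose k : ℚ) * ((a * n + 1 + k).choose ((a - 1) * n + 1 + k) : ℚ) /
        (a * n + 1 + k)) = 0 := by
  have step : ∀ k, (n.choose k : ℚ) * ((a * n + 1 + k).choose ((a - 1) * n + 1 + k) : ℚ) /
        (a * n + 1 + k) =
      (n.choose k : ℚ) * ((a * n + k).choose (n - 1) : ℚ) / n := by
    intro k
    have hsymm : (a * n + 1 + k).choose ((a - 1) * n + 1 + k) = (a * n + 1 + k).choose n := by
      have h1 : (a - 1) * n + 1 + k = (a * n + 1 + k) - n := by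
        have : n ≤ a * n := Nat.le_mul_of_pos_left n ha
        cases a with
        | zero => omega
        | succ b => simp [Nat.succ_mul]; omega
      rw [h1, Nat.choose_symm (by nlinarith [Nat.le_mul_of_pos_left n ha])]
    rw [hsymm]
    have hmul : (a * n + k + 1) * (a * n + k).choose (n - 1) =
        (a * n + k + 1).choose n * n := by
      have := Nat.add_one_mul_choose_eq (a * n + k) (n - 1)
      simp only [Nat.succ_eq_add_one, Nat.sub_add_cancel hn] at this
      exact this
    have hmulQ : ((a * n + k + 1 : ℕ) : ℚ) * ((a * n + k).choose (n - 1) : ℚ) =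
        ((a * n + k + 1).choose n : ℚ) * n := by exact_mod_cast congrArg (Nat.cast : ℕ → ℚ) hmul
    have hd1 : ((a : ℚ) * n + 1 + k) ≠ 0 := by positivity
    have hd2 : (n : ℚ) ≠ 0 := by positivity
    have hN : (a * n + 1 + k) = (a * n + k + 1) := by omega
    rw [hN]
    field_simp
    push_cast at hmulQ ⊢
    linear_combination (-(n.choose k : ℚ)) * hmulQ
  calc ∑ k ∈ Finset.range (n + 1),
        (-1 : ℚ) ^ k * ((n.choose k : ℚ) * ((a * n + 1 + k).choose ((a - 1) * n + 1 + k) : ℚ) /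
          (a * n + 1 + k))
      = (1 / n) * ∑ k ∈ Finset.range (n + 1),
          (-1 : ℚ) ^ k * (n.choose k : ℚ) * ((a * n + k).choose (n - 1) : ℚ) := by
        rw [Finset.mul_sum]
        refine Finset.sum_congr rfl fun k _ => ?_
        rw [step k]
        ring
    _ = 0 := by rw [key_alt a n hn, mul_zero]

/-- For integers `a ≥ 1` and `n ≥ 1`, the bivariate polynomial
`P_n(X,Y) = ∑_{k=0}^{n} [C(n,k)·C(an+1+k, (a−1)n+1+k)/(an+1+k)]·X^{n−k}·Y^k`
with coefficients in `ℚ` is divisible by `X + Y` in `ℚ[X,Y]`. -/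
theorem stmt_5 (a n : ℕ) (ha : 1 ≤ a) (hn : 1 ≤ n) :
    (X 0 + X 1 : MvPolynomial (Fin 2) ℚ) ∣
      ∑ k ∈ Finset.range (n + 1),
        C ((n.choose k : ℚ) * ((a * n + 1 + k).choose ((a - 1) * n + 1 + k) : ℚ) /
            (a * n + 1 + k)) *
          X 0 ^ (n - k) * X 1 ^ k := by
  set c : ℕ → ℚ := fun k => (n.choose k : ℚ) *
      ((a * n + 1 + k).choose ((a - 1) * n + 1 + k) : ℚ) / (a * n + 1 + k) with hc
  have expand : ∀ k ∈ Finset.range (n + 1),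
      C (c k) * X 0 ^ (n - k) * X 1 ^ k =
      C (c k) * X 0 ^ (n - k) * (X 1 ^ k - (-(X 0 : MvPolynomial (Fin 2) ℚ)) ^ k) +
        C ((-1 : ℚ) ^ k * c k) * X 0 ^ n := by
    intro k hk
    have hk' : k ≤ n := Nat.lt_succ_iff.mp (Finset.mem_range.mp hk)
    have hpow : (X 0 : MvPolynomial (Fin 2) ℚ) ^ (n - k) * X 0 ^ k = X 0 ^ n := by
      rw [← pow_add, Nat.sub_add_cancel hk']
    have hC : (C ((-1 : ℚ) ^ k) : MvPolynomial (Fin 2) ℚ) = (-1) ^ k := by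
      simp
    rw [map_mul, hC, neg_pow]
    linear_combination ((-1 : MvPolynomial (Fin 2) ℚ) ^ k * C (c k)) * hpow
  rw [Finset.sum_congr rfl expand, Finset.sum_add_distrib]
  refine dvd_add (Finset.dvd_sum fun k _ => ?_) ?_
  · have hdvd : (X 0 + X 1 : MvPolynomial (Fin 2) ℚ) ∣ X 1 ^ k - (-(X 0)) ^ k := by
      have h := sub_dvd_pow_sub_pow (X 1 : MvPolynomial (Fin 2) ℚ) (-(X 0)) k
      have he : (X 1 : MvPolynomial (Fin 2) ℚ) - (-(X 0)) = X 0 + X 1 := by ring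
      rwa [he] at h
    exact Dvd.dvd.mul_left hdvd _
  · rw [← Finset.sum_mul, ← map_sum, alt_coeff a n ha hn, map_zero, zero_mul]
    exact dvd_zero _
end

section
/- Let a ≥ 1, n ≥ 1 be integers and let F(n,k) = (−1)^k · C(n,k) · C(an+1+k, (a−1)n+1+k)/(an+1+k) and H(n,k) = −F(n,k) · k·((a−1)n+1+k)/(n·(an+1)), both rational numbers. Then for every natural number k, F(n,k) = H(n,k+1) − H(n,k). -/
/-!
`F` is hypergeometric in `k`: the two binomial ratios give
`F(k+1) · (k+1)((a−1)n+2+k) = −(n−k)(an+1+k) · F(k)`.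
Substituting this into `H(k+1)` reduces the claim to the polynomial identity
`(n−k)(an+1+k) + k((a−1)n+1+k) = n(an+1)`.
-/

theorem Nat.cast_choose_succ_right_mul {R : Type*} [CommRing R] (n k : ℕ) :
    (n.choose (k + 1) : R) * (k + 1) = n.choose k * ((n : R) - k) := by
  rcases le_or_gt k n with hkn | hnk
  · simpa [Nat.cast_sub hkn] using congrArg (Nat.cast : ℕ → R) (Nat.choose_succ_right_eq n k)
  · simp [Nat.choose_eq_zero_of_lt hnk, Nat.choose_eq_zero_of_lt (hnk.trans (Nat.lt_succ_self k))]

def geodeTerm (a n k : ℕ) : ℚ :=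
  (-1) ^ k * n.choose k * (a * n + 1 + k).choose ((a - 1) * n + 1 + k) / (a * n + 1 + k)

theorem geodeTerm_succ_mul {a : ℕ} (ha : 1 ≤ a) (n k : ℕ) :
    geodeTerm a n (k + 1) * ((k + 1) * (((a : ℚ) - 1) * n + 1 + k + 1)) =
      -(((n : ℚ) - k) * (a * n + 1 + k)) * geodeTerm a n k := by
  have hn_choose := Nat.cast_choose_succ_right_mul (R := ℚ) n k
  have hA_choose := congrArg (Nat.cast : ℕ → ℚ)
    (Nat.add_one_mul_choose_eq (a * n + 1 + k) ((a - 1) * n + 1 + k))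
  push_cast [Nat.cast_sub ha] at hA_choose
  have hA : (a : ℚ) * n + 1 + k ≠ 0 := by positivity
  unfold geodeTerm
  rw [← add_assoc (a * n + 1) k 1, ← add_assoc ((a - 1) * n + 1) k 1]
  push_cast [pow_succ, Nat.cast_sub ha]
  field_simp
  linear_combination
    (-(((a * n + 1 + k + 1).choose ((a - 1) * n + 1 + k + 1) : ℚ) *
      (((a : ℚ) - 1) * n + 1 + k + 1))) * hn_choose +
    ((n.choose k : ℚ) * (n - k)) * hA_choose

/-- The Wilf–Zeilberger certificate identity for the second Geode conjecture: with
`F(n,k) = (−1)^k · C(n,k) · C(an+1+k, (a−1)n+1+k)/(an+1+k)` and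
`H(n,k) = −F(n,k) · k·((a−1)n+1+k)/(n·(an+1))`, we have `F(n,k) = H(n,k+1) − H(n,k)`
for all natural numbers `k` and integers `a ≥ 1`, `n ≥ 1`. -/
theorem stmt_7 (a n : ℕ) (ha : 1 ≤ a) (hn : 1 ≤ n) (k : ℕ)
    (F H : ℕ → ℚ)
    (hF : ∀ j : ℕ, F j = (-1 : ℚ) ^ j * (n.choose j : ℚ) *
        ((a * n + 1 + j).choose ((a - 1) * n + 1 + j) : ℚ) / (a * n + 1 + j))
    (hH : ∀ j : ℕ, H j = -F j * ((j : ℚ) * (((a : ℚ) - 1) * n + 1 + j)) /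
        ((n : ℚ) * ((a : ℚ) * n + 1))) :
    F k = H (k + 1) - H k := by
  have hF_eq (j : ℕ) : F j = geodeTerm a n j := hF j
  have hn0 : (n : ℚ) ≠ 0 := by positivity
  have han : (a : ℚ) * n + 1 ≠ 0 := by positivity
  rw [hH, hH, hF_eq, hF_eq]
  push_cast
  field_simp
  linear_combination geodeTerm_succ_mul ha n k
end

section
/- For all integers a ≥ 1 and non-negative integers m_a, m_{a+1}, setting m = m_a + m_{a+1}, n = m + 1 and i = m_{a+1}, the rational number (1/(an+1)) · C(n−1, i) · C(an+1+i, (a−1)n+1+i) equals (a·m_a + (a+1)·(m_{a+1}+1))! / [ (a·(m+1)+1) · (m+1) · ((a−1)·m_a + a·(m_{a+1}+1))! · m_a! · m_{a+1}! ]. -/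
open Nat

/-- Wildberger–Rubine's second Geode conjecture (Theorem 2.1): for integers `a ≥ 1`
and non-negative integers `ma, ma1`, with `m = ma + ma1`, `n = m + 1` and `i = ma1`,
`(1/(an+1)) · C(n−1, i) · C(an+1+i, (a−1)n+1+i)` equals
`(a·ma + (a+1)·(ma1+1))! / [(a·(m+1)+1)·(m+1)·((a−1)·ma + a·(ma1+1))!·ma!·ma1!]`. -/
theorem stmt_9 (a ma ma1 : ℕ) (ha : 1 ≤ a) :
    (1 : ℚ) / ((a : ℚ) * (ma + ma1 + 1) + 1) *
        (((ma + ma1 + 1) - 1).choose ma1 : ℚ) *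
        ((a * (ma + ma1 + 1) + 1 + ma1).choose
            ((a - 1) * (ma + ma1 + 1) + 1 + ma1) : ℚ)
      = (((a * ma + (a + 1) * (ma1 + 1))! : ℕ) : ℚ) /
          (((a : ℚ) * ((ma + ma1) + 1) + 1) * (((ma + ma1) + 1 : ℕ) : ℚ) *
            ((((a - 1) * ma + a * (ma1 + 1))! : ℕ) : ℚ) * (ma ! : ℚ) * (ma1 ! : ℚ)) := by
  obtain ⟨b, rfl⟩ : ∃ b, a = b + 1 := ⟨a - 1, (Nat.succ_pred_eq_of_pos ha).symm⟩
  have e1 : (b + 1) * ma + (b + 1 + 1) * (ma1 + 1) = (b+1) * (ma + ma1 + 1) + 1 + ma1 := by ring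
  have e2 : (b + 1 - 1) * ma + (b + 1) * (ma1 + 1) = b * (ma + ma1 + 1) + 1 + ma1 := by
    simp; ring
  have e3 : (ma + ma1 + 1) - 1 = ma + ma1 := rfl
  rw [e1, e2, e3]
  set A := (b+1) * (ma + ma1 + 1) + 1 + ma1 with hA
  set B := b * (ma + ma1 + 1) + 1 + ma1 with hB
  have hABeq : A = B + (ma + ma1 + 1) := by rw [hA, hB]; ring
  have hBA : B ≤ A := by omega
  have hAB : A - B = ma + ma1 + 1 := by omega
  have h1 : (ma + ma1).choose ma1 * ma1 ! * ma ! = (ma + ma1)! := by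
    have := Nat.choose_mul_factorial_mul_factorial (Nat.le_add_left ma1 ma)
    simpa using this
  have h2 : A.choose B * B ! * (ma + ma1 + 1)! = A ! := by
    have := Nat.choose_mul_factorial_mul_factorial hBA
    rwa [hAB] at this
  have key : (ma + ma1).choose ma1 * (A.choose B) * ((ma + ma1 + 1) * B ! * ma ! * ma1 !) = A ! := by
    calc (ma + ma1).choose ma1 * (A.choose B) * ((ma + ma1 + 1) * B ! * ma ! * ma1 !)
        = A.choose B * B ! * ((ma + ma1 + 1) * ((ma + ma1).choose ma1 * ma1 ! * ma !)) := by ring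
      _ = A.choose B * B ! * (ma + ma1 + 1)! := by rw [h1, Nat.factorial_succ]
      _ = A ! := h2
  have hd1 : ((b:ℚ) + 1) * (↑ma + ↑ma1 + 1) + 1 ≠ 0 := by positivity
  have hd2 : ((ma + ma1 + 1 : ℕ) : ℚ) ≠ 0 := by positivity
  have hd3 : ((B ! : ℕ) : ℚ) ≠ 0 := by positivity
  have hd4 : ((ma ! : ℕ) : ℚ) ≠ 0 := by positivity
  have hd5 : ((ma1 ! : ℕ) : ℚ) ≠ 0 := by positivity
  field_simp
  push_cast [← key]
  ring
end

section
/- For every integer n ≥ 1, the alternating sum ∑_{m=0}^{n−1} (−1)^{n−1−m} · C(n−1, m) · C(2n+1+m, n+1+m) equals 2n+1. -/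
open Finset

lemma aux_diff (k : ℕ) : ∀ n x : ℕ, k ≤ n →
    ∑ m ∈ Finset.range (k+1), (-1:ℤ)^m * (k.choose m : ℤ) * ((x+m).choose n : ℤ)
      = (-1)^k * (x.choose (n-k) : ℤ) := by
  induction k with
  | zero => intro n x h; simp
  | succ k ih =>
    intro n x h
    have hk : k ≤ n := Nat.le_of_succ_le h
    have hA := ih n (x+1) hk
    have hB := ih n x hk
    rw [Finset.sum_range_succ'] at hB ⊢
    have hsplit : ∀ i : ℕ, (-1:ℤ)^(i+1) * ((k+1).choose (i+1) : ℤ) * ((x+(i+1)).choose n : ℤ)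
        = -((-1)^i * (k.choose i : ℤ) * (((x+1)+i).choose n : ℤ))
          + (-1)^(i+1) * (k.choose (i+1) : ℤ) * ((x+(i+1)).choose n : ℤ) := by
      intro i
      have hx : x + (i+1) = (x+1)+i := by omega
      rw [Nat.choose_succ_succ, hx]
      push_cast
      ring
    rw [Finset.sum_congr rfl (fun i _ => hsplit i), Finset.sum_add_distrib,
      Finset.sum_neg_distrib]
    rw [hA]
    -- now handle ∑_{i<k+1} (-1)^(i+1) C(k,i+1) C(x+i+1, n)
    have hBsum : ∑ i ∈ Finset.range (k+1), (-1:ℤ)^(i+1) * (k.choose (i+1) : ℤ) * ((x+(i+1)).choose n : ℤ)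
        = (-1)^k * (x.choose (n-k) : ℤ) - ((x+0).choose n : ℤ) := by
      rw [Finset.sum_range_succ]
      simp only [Nat.choose_succ_self, Nat.cast_zero, mul_zero, zero_mul, add_zero,
        Nat.choose_zero_right, Nat.cast_one] at hB ⊢
      linear_combination hB
    rw [hBsum]
    have hnk : n - k = (n - (k+1)) + 1 := by omega
    have e1 : ((x+1).choose (n-k) : ℤ)
        = (x.choose (n-(k+1)) : ℤ) + (x.choose (n-k) : ℤ) := by
      rw [hnk]; exact_mod_cast Nat.choose_succ_succ x (n-(k+1))
    rw [e1]
    simp only [Nat.choose_zero_right, Nat.cast_one, pow_zero, one_mul, pow_succ]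
    ring
-- theorem

/-- For every integer `n ≥ 1`, the alternating sum
`∑_{m=0}^{n−1} (−1)^{n−1−m} · C(n−1, m) · C(2n+1+m, n+1+m)` equals `2n+1`. -/
theorem stmt_10 (n : ℕ) (hn : 1 ≤ n) :
    ∑ m ∈ Finset.range n,
      (-1 : ℤ) ^ (n - 1 - m) * ((n - 1).choose m : ℤ) *
        ((2 * n + 1 + m).choose (n + 1 + m) : ℤ) = 2 * n + 1 := by
  have key := aux_diff (n-1) n (2*n+1) (by omega)
  rw [show n - 1 + 1 = n by omega] at key
  have hterm : ∀ m ∈ Finset.range n,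
      (-1 : ℤ) ^ (n - 1 - m) * ((n - 1).choose m : ℤ) *
        ((2 * n + 1 + m).choose (n + 1 + m) : ℤ)
      = (-1)^(n-1) * ((-1:ℤ)^m * ((n-1).choose m : ℤ) * ((2*n+1+m).choose n : ℤ)) := by
    intro m hm
    have hmn : m ≤ n - 1 := by
      have := Finset.mem_range.mp hm; omega
    have hsign : (-1:ℤ)^(n-1-m) = (-1)^(n-1) * (-1)^m := by
      have h1 : (-1:ℤ)^(n-1-m) = (-1:ℤ)^(n-1-m+2*m) := by
        rw [pow_add]; simp [pow_mul]
      rw [h1, show n-1-m+2*m = (n-1)+m by omega, pow_add]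
    have hch : (2*n+1+m).choose (n+1+m) = (2*n+1+m).choose n := by
      rw [← Nat.choose_symm (by omega : n+1+m ≤ 2*n+1+m),
        show 2*n+1+m - (n+1+m) = n by omega]
    rw [hsign, hch]
    ring
  rw [Finset.sum_congr rfl hterm, ← Finset.mul_sum, key,
    show n - (n-1) = 1 by omega]
  rw [← mul_assoc, ← pow_add, ← two_mul, pow_mul]
  simp [Nat.choose_one_right]
end

section
/- For all integers n ≥ 1 and a ≥ 1: ∑ over all tuples (m_1, …, m_{2a}) of non-negative integers with m_1 + ⋯ + m_{2a} = n of (−1)^{1+|λ|} · (n − m_{2a}) · M(n; m_1, …, m_{2a}) · C(|λ|+n+1, |λ|+1)/(|λ|+n+1) equals a^{n−1}, where |λ| = m_1 + 2m_2 + ⋯ + 2a·m_{2a}. -/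
/-!
Write `S = |λ|`. Since `C(S+n+1, S+1)/(S+n+1) = C(S+n, n-1)/n` and `(-1)^S C(S+n, n-1)` is the
coefficient of `X^(n-1)` in `(1+X)^n (-(1+X))^S`, the sum is `-1/n` times the coefficient of
`X^(n-1)` in `(1+X)^n ∑_m M(n; m) (n - m_{2a}) ∏_j p_j^(m_j)`, where `p_j = (-(1+X))^j`.
Differentiating the multinomial theorem in one variable gives
`∑_m M(n; m) m_t ∏_j x_j^(m_j) = n x_t (∑_j x_j)^(n-1)`, and here `∑_j p_j = X V` with
`V = ∑_{k<a} (1+X)^(2k+1)`. So the inner sum is `n (X V)^n - n (1+X)^(2a) (X V)^(n-1)`, whose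
product with `(1+X)^n` has `X^(n-1)`-coefficient `-n V(0)^(n-1) = -n a^(n-1)`.
-/

open Finset Polynomial

namespace Finset

variable {ι R : Type*} [DecidableEq ι]

theorem sum_piAntidiag_multinomial_mul_apply_mul_prod_pow [CommSemiring R]
    (s : Finset ι) (x : ι → R) (n : ℕ) {t : ι} (ht : t ∈ s) :
    ∑ m ∈ piAntidiag s n, (Nat.multinomial s m : R) * m t * ∏ j ∈ s, x j ^ m j =
      n * x t * (∑ j ∈ s, x j) ^ (n - 1) := by
  set y : ι → R[X] := fun j => C (x j) * X ^ (if j = t then 1 else 0)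
  have prod_y (m : ι → ℕ) : ∏ j ∈ s, y j ^ m j = C (∏ j ∈ s, x j ^ m j) * X ^ m t := by
    simp only [y, mul_pow, prod_mul_distrib, ← pow_mul, prod_pow_eq_pow_sum, map_prod, map_pow,
      ite_mul, one_mul, zero_mul, sum_ite_eq', if_pos ht]
  have expand : (∑ j ∈ s, y j) ^ n = ∑ m ∈ piAntidiag s n,
      C ((Nat.multinomial s m : R) * ∏ j ∈ s, x j ^ m j) * X ^ m t := by
    rw [sum_pow_eq_sum_piAntidiag]
    refine sum_congr rfl fun m _ => ?_
    rw [prod_y, map_mul, map_natCast, mul_assoc]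
  have deriv_y : derivative (∑ j ∈ s, y j) = C (x t) := by
    rw [derivative_sum, sum_eq_single_of_mem t ht fun j _ hj => by simp [y, hj]]
    simp [y]
  have eval_y : (∑ j ∈ s, y j).eval 1 = ∑ j ∈ s, x j := by
    simp only [y, eval_finsetSum, eval_mul, eval_C, eval_pow, eval_X, one_pow, mul_one]
  have deriv_at_one := congrArg (fun f => (derivative f).eval 1) expand
  simp only [derivative_pow, deriv_y, eval_mul, eval_C, eval_pow, eval_y, derivative_sum,
    derivative_C_mul_X_pow, eval_finsetSum, eval_X, one_pow, mul_one] at deriv_at_one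
  rw [mul_right_comm, deriv_at_one]
  exact sum_congr rfl fun m _ => by ring

theorem sum_piAntidiag_multinomial_mul_sub_apply_mul_prod_pow [CommRing R]
    (s : Finset ι) (x : ι → R) (n : ℕ) {t : ι} (ht : t ∈ s) :
    ∑ m ∈ piAntidiag s n, (Nat.multinomial s m : R) * (n - m t) * ∏ j ∈ s, x j ^ m j =
      n * (∑ j ∈ s, x j) ^ n - n * x t * (∑ j ∈ s, x j) ^ (n - 1) := by
  rw [← sum_piAntidiag_multinomial_mul_apply_mul_prod_pow s x n ht, sum_pow_eq_sum_piAntidiag,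
    mul_sum, ← sum_sub_distrib]
  exact sum_congr rfl fun m _ => by ring

end Finset

namespace Polynomial

variable {R : Type*} [CommRing R]

theorem coeff_one_add_X_pow_mul_neg_one_add_X_pow (n S k : ℕ) :
    ((1 + X : R[X]) ^ n * (-(1 + X)) ^ S).coeff k = (-1) ^ S * ((S + n).choose k : R) := by
  rw [neg_pow, ← C_1, ← C_neg, ← C_pow, C_1, mul_left_comm, ← pow_add, add_comm n,
    coeff_C_mul, coeff_one_add_X_pow]

theorem sum_fin_two_mul_neg_one_add_X_pow (a : ℕ) :
    ∑ j : Fin (2 * a), (-(1 + X : R[X])) ^ (j.1 + 1) =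
      X * ∑ k ∈ range a, (1 + X) ^ (2 * k + 1) := by
  rw [Fin.sum_univ_eq_sum_range (fun j => (-(1 + X : R[X])) ^ (j + 1))]
  induction a with
  | zero => simp
  | succ a ih =>
    rw [show 2 * (a + 1) = 2 * a + 1 + 1 by ring, sum_range_succ, sum_range_succ, ih,
      sum_range_succ, mul_add, Odd.neg_pow ⟨a, rfl⟩, Even.neg_pow ⟨a + 1, by ring⟩]
    ring

theorem coeff_mul_X_pow_sub_mul_X_pow_pred (f g : R[X]) {n : ℕ} (hn : 1 ≤ n) :
    (f * X ^ n - g * X ^ (n - 1)).coeff (n - 1) = -g.eval 0 := by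
  rw [coeff_sub, coeff_mul_X_pow', coeff_mul_X_pow', if_neg (by omega), if_pos le_rfl,
    Nat.sub_self, coeff_zero_eq_eval_zero, zero_sub]

theorem sum_multinomial_mul_coeff_prod_neg_one_add_X_pow {n : ℕ} (hn : 1 ≤ n) {a : ℕ}
    (t : Fin (2 * a)) (ht : t.val + 1 = 2 * a) :
    ∑ m ∈ piAntidiag univ n, (Nat.multinomial univ m : R) * (n - m t) *
        ((1 + X : R[X]) ^ n * ∏ j : Fin (2 * a), ((-(1 + X)) ^ (j.val + 1)) ^ m j).coeff
          (n - 1) =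
      -(n : R) * (a : R) ^ (n - 1) := by
  set x : Fin (2 * a) → R[X] := fun j => (-(1 + X)) ^ (j.val + 1)
  set V : R[X] := ∑ k ∈ range a, (1 + X) ^ (2 * k + 1)
  have x_t : x t = (1 + X) ^ (2 * a) := by
    simp only [x, ht]
    exact (even_two_mul a).neg_pow _
  have sum_x : ∑ j, x j = X * V := sum_fin_two_mul_neg_one_add_X_pow a
  have eval_V : V.eval 0 = a := by simp [V, eval_finsetSum]
  calc _ = ((1 + X) ^ n * ∑ m ∈ piAntidiag univ n,
        (Nat.multinomial univ m : R[X]) * (n - m t) * ∏ j, x j ^ m j).coeff (n - 1) := by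
        rw [mul_sum, finsetSum_coeff]
        refine sum_congr rfl fun m _ => ?_
        rw [mul_left_comm, ← map_natCast C, ← map_natCast C, ← map_natCast C (m t),
          ← map_sub, ← map_mul, coeff_C_mul]
    _ = (((n : R[X]) * (1 + X) ^ n * V ^ n) * X ^ n -
          ((n : R[X]) * (1 + X) ^ (n + 2 * a) * V ^ (n - 1)) * X ^ (n - 1)).coeff (n - 1) := by
        rw [sum_piAntidiag_multinomial_mul_sub_apply_mul_prod_pow _ _ _ (mem_univ t), sum_x, x_t]
        congr 1
        ring
    _ = -(n : R) * (a : R) ^ (n - 1) := by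
        rw [coeff_mul_X_pow_sub_mul_X_pow_pred _ _ hn]
        simp [eval_V]

end Polynomial

theorem Nat.cast_choose_add_one_div_eq {K : Type*} [Field K] [CharZero K] (S : ℕ) {n : ℕ}
    (hn : 1 ≤ n) :
    ((S + n + 1).choose (S + 1) : K) / (S + n + 1) = ((S + n).choose (n - 1) : K) / n := by
  obtain ⟨k, rfl⟩ := Nat.exists_eq_add_of_le' hn
  have key := Nat.add_one_mul_choose_eq (S + (k + 1)) k
  rw [Nat.choose_symm_of_eq_add (show S + (k + 1) + 1 = (S + 1) + (k + 1) by ring)]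
  rw [div_eq_div_iff (by exact_mod_cast (S + (k + 1)).succ_ne_zero)
    (by exact_mod_cast k.succ_ne_zero), Nat.add_sub_cancel]
  exact_mod_cast key.symm.trans (mul_comm _ _)

/-- Identity (3.3), the key identity in the proof of the third Geode conjecture:
for integers `n ≥ 1` and `a ≥ 1`, summing over all tuples `(m_1, …, m_{2a})` of
non-negative integers with `m_1 + ⋯ + m_{2a} = n`,
`∑ (−1)^{1+|λ|} · (n − m_{2a}) · M(n; m_1,…,m_{2a}) · C(|λ|+n+1, |λ|+1)/(|λ|+n+1) = a^{n−1}`,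
where `|λ| = m_1 + 2m_2 + ⋯ + 2a·m_{2a}`. -/
theorem stmt_11 (n a : ℕ) (hn : 1 ≤ n) (ha : 1 ≤ a) :
    ∑ m ∈ Finset.Nat.antidiagonalTuple (2 * a) n,
      (-1 : ℚ) ^ (1 + ∑ i : Fin (2 * a), (i.val + 1) * m i) *
        ((n : ℚ) - (m ⟨2 * a - 1, by omega⟩ : ℚ)) *
        (Nat.multinomial Finset.univ m : ℚ) *
        (((∑ i : Fin (2 * a), (i.val + 1) * m i) + n + 1).choose
            ((∑ i : Fin (2 * a), (i.val + 1) * m i) + 1) : ℚ) /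
        (((∑ i : Fin (2 * a), (i.val + 1) * m i) : ℚ) + n + 1)
      = (a : ℚ) ^ (n - 1) := by
  set t : Fin (2 * a) := ⟨2 * a - 1, by omega⟩
  rw [← piAntidiag_univ_fin_eq_antidiagonalTuple]
  calc _ = -(n : ℚ)⁻¹ * ∑ m ∈ piAntidiag univ n, (Nat.multinomial univ m : ℚ) * (n - m t) *
        ((1 + X : ℚ[X]) ^ n * ∏ j : Fin (2 * a), ((-(1 + X)) ^ (j.val + 1)) ^ m j).coeff
          (n - 1) := by
        rw [mul_sum]
        refine sum_congr rfl fun m _ => ?_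
        set S := ∑ i : Fin (2 * a), (i.val + 1) * m i
        have cast_S : ∑ i : Fin (2 * a), ((i.val : ℚ) + 1) * (m i : ℚ) = S := by simp [S]
        simp only [← pow_mul, prod_pow_eq_pow_sum]
        rw [coeff_one_add_X_pow_mul_neg_one_add_X_pow, cast_S, mul_div_assoc,
          Nat.cast_choose_add_one_div_eq S hn, pow_add]
        ring
    _ = (a : ℚ) ^ (n - 1) := by
        rw [sum_multinomial_mul_coeff_prod_neg_one_add_X_pow hn t
          (Nat.sub_add_cancel (by omega))]
        field_simp
end

section
/- For all integers n ≥ 1 and a ≥ 1: ∑ over all tuples (m_1, …, m_{2a}) of non-negative integers with m_1 + ⋯ + m_{2a} = n of (−1)^{|λ|} · M(n; m_1, …, m_{2a}) · C(|λ|+n, |λ|+1) equals 0, where |λ| = m_1 + 2m_2 + ⋯ + 2a·m_{2a}. -/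
open Finset Polynomial

/-- Identity (3.4) in the proof of the third Geode conjecture: for integers
`n ≥ 1` and `a ≥ 1`, summing over all tuples `(m_1, …, m_{2a})` of non-negative
integers with `m_1 + ⋯ + m_{2a} = n`,
`∑ (−1)^{|λ|} · M(n; m_1,…,m_{2a}) · C(|λ|+n, |λ|+1) = 0`,
where `|λ| = m_1 + 2m_2 + ⋯ + 2a·m_{2a}`. -/
theorem stmt_12 (n a : ℕ) (hn : 1 ≤ n) (ha : 1 ≤ a) :
    ∑ m ∈ Finset.Nat.antidiagonalTuple (2 * a) n,
      (-1 : ℤ) ^ (∑ i : Fin (2 * a), (i.val + 1) * m i) *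
        (Nat.multinomial Finset.univ m : ℤ) *
        (((∑ i : Fin (2 * a), (i.val + 1) * m i) + n).choose
            ((∑ i : Fin (2 * a), (i.val + 1) * m i) + 1) : ℤ)
      = 0 := by
  classical
  set A := 2 * a with hA
  set s : (Fin A → ℕ) → ℕ := fun m => ∑ i : Fin A, (i.val + 1) * m i with hs
  set g : Polynomial ℤ := ∑ i : Fin A, (-Polynomial.X) ^ (i.val + 1) with hg
  -- g has 1 as a root
  have hroot : g.eval 1 = 0 := by
    rw [hg, Polynomial.eval_finset_sum]
    simp only [Polynomial.eval_pow, Polynomial.eval_neg, Polynomial.eval_X]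
    rw [Fin.sum_univ_eq_sum_range (fun i => ((-1 : ℤ)) ^ (i + 1))]
    have : ∑ i ∈ Finset.range A, ((-1 : ℤ)) ^ (i + 1)
        = -∑ i ∈ Finset.range A, ((-1 : ℤ)) ^ i := by
      rw [← Finset.sum_neg_distrib]
      exact Finset.sum_congr rfl fun i _ => by ring
    rw [this, neg_one_geom_sum]
    simp [hA, Nat.even_iff]
  have hdvd : (Polynomial.X - Polynomial.C 1) ∣ g :=
    Polynomial.dvd_iff_isRoot.2 hroot
  have hdvdP : (Polynomial.X - Polynomial.C 1) ^ n ∣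
      Polynomial.X ^ n * g ^ n := (pow_dvd_pow_of_dvd hdvd n).mul_left _
  have h1 : (Polynomial.X - Polynomial.C 1 : Polynomial ℤ) ∣
      Polynomial.derivative^[n - 1] (Polynomial.X ^ n * g ^ n) := by
    have h := Polynomial.pow_sub_dvd_iterate_derivative_of_pow_dvd (n - 1) hdvdP
    have hnn : n - (n - 1) = 1 := by omega
    rwa [hnn, pow_one] at h
  have heval : (Polynomial.derivative^[n - 1] (Polynomial.X ^ n * g ^ n)).eval 1 = 0 := by
    obtain ⟨q, hq⟩ := h1
    simp [hq]
  -- expand (X^n * g^n) via the multinomial theorem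
  have hexp : Polynomial.X ^ n * g ^ n =
      ∑ m ∈ Finset.Nat.antidiagonalTuple A n,
        Polynomial.C ((-1 : ℤ) ^ (s m) * (Nat.multinomial Finset.univ m : ℤ)) *
          Polynomial.X ^ (s m + n) := by
    rw [hg, Finset.sum_pow_eq_sum_piAntidiag, Finset.piAntidiag_univ_fin_eq_antidiagonalTuple,
      Finset.mul_sum]
    refine Finset.sum_congr rfl fun m hm => ?_
    have hprod : (∏ i : Fin A, ((-Polynomial.X : Polynomial ℤ) ^ (i.val + 1)) ^ (m i))
        = (-Polynomial.X) ^ (s m) := by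
      rw [hs, ← Finset.prod_pow_eq_pow_sum]
      exact Finset.prod_congr rfl fun i _ => by rw [← pow_mul]
    rw [hprod, neg_pow, map_mul, map_pow, map_neg, map_one, Polynomial.C_eq_natCast]
    ring
  rw [hexp] at heval
  rw [Polynomial.iterate_derivative_sum, Polynomial.eval_finset_sum] at heval
  have hterm : ∀ m ∈ Finset.Nat.antidiagonalTuple A n,
      (Polynomial.derivative^[n - 1]
        (Polynomial.C ((-1 : ℤ) ^ (s m) * (Nat.multinomial Finset.univ m : ℤ)) *
          Polynomial.X ^ (s m + n))).eval 1
      = ((Nat.factorial (n - 1) : ℕ) : ℤ) * ((-1 : ℤ) ^ (s m) * (Nat.multinomial Finset.univ m : ℤ) *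
          ((s m + n).choose (s m + 1) : ℤ)) := by
    intro m hm
    rw [Polynomial.iterate_derivative_C_mul, Polynomial.iterate_derivative_X_pow_eq_C_mul]
    simp only [Polynomial.eval_mul, Polynomial.eval_C, Polynomial.eval_pow, Polynomial.eval_X,
      one_pow, mul_one]
    have hdf : (s m + n).descFactorial (n - 1) = Nat.factorial (n - 1) * (s m + n).choose (s m + 1) := by
      rw [Nat.descFactorial_eq_factorial_mul_choose]
      congr 1
      exact Nat.choose_symm_of_eq_add (by omega)
    rw [hdf]
    push_cast
    ring
  rw [Finset.sum_congr rfl hterm, ← Finset.mul_sum] at heval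
  have hfac : ((Nat.factorial (n - 1) : ℕ) : ℤ) ≠ 0 := by exact_mod_cast (Nat.factorial_ne_zero _)
  have := (mul_eq_zero.1 heval).resolve_left hfac
  simpa [hs] using this
end

section
/- For all integers n ≥ 1 and a ≥ 1: ∑ over all tuples (m_1, …, m_{2a}) of non-negative integers with m_1 + ⋯ + m_{2a} = n−1 of (−1)^{|μ|} · M(n−1; m_1, …, m_{2a}) · C(|μ|+2a+n, |μ|+2a+1) equals a^{n−1}, where |μ| = m_1 + 2m_2 + ⋯ + 2a·m_{2a}. -/
open Finset

open Polynomial in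
lemma geo_aux (a : ℕ) : ∑ i ∈ Finset.range (2*a), (-(1 + X : Polynomial ℤ))^(i+1)
    = X * ∑ j ∈ Finset.range a, (1 + X)^(2*j+1) := by
  induction a with
  | zero => simp
  | succ a ih =>
    rw [show 2*(a+1) = 2*a + 1 + 1 by ring, Finset.sum_range_succ, Finset.sum_range_succ, ih,
      Finset.sum_range_succ]
    have h1 : (-(1 + X : Polynomial ℤ))^(2*a+1) = -((1+X)^(2*a+1)) := Odd.neg_pow ⟨a, by ring⟩ _
    have h2 : (-(1 + X : Polynomial ℤ))^(2*a+1+1) = (1+X)^(2*a+1+1) := by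
      exact Even.neg_pow ⟨a+1, by ring⟩ _
    rw [h1, h2]
    ring

/-- Identity (3.5) in the proof of the third Geode conjecture: for integers
`n ≥ 1` and `a ≥ 1`, summing over all tuples `(m_1, …, m_{2a})` of non-negative
integers with `m_1 + ⋯ + m_{2a} = n−1`,
`∑ (−1)^{|μ|} · M(n−1; m_1,…,m_{2a}) · C(|μ|+2a+n, |μ|+2a+1) = a^{n−1}`,
where `|μ| = m_1 + 2m_2 + ⋯ + 2a·m_{2a}`. -/
theorem stmt_13 (n a : ℕ) (hn : 1 ≤ n) (ha : 1 ≤ a) :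
    ∑ m ∈ Finset.Nat.antidiagonalTuple (2 * a) (n - 1),
      (-1 : ℤ) ^ (∑ i : Fin (2 * a), (i.val + 1) * m i) *
        (Nat.multinomial Finset.univ m : ℤ) *
        (((∑ i : Fin (2 * a), (i.val + 1) * m i) + 2 * a + n).choose
            ((∑ i : Fin (2 * a), (i.val + 1) * m i) + 2 * a + 1) : ℤ)
      = (a : ℤ) ^ (n - 1) := by
  classical
  obtain ⟨N, rfl⟩ : ∃ N, n = N + 1 := ⟨n - 1, (Nat.succ_pred_eq_of_pos hn).symm⟩
  simp only [Nat.add_sub_cancel]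
  open Polynomial in
  calc
    ∑ m ∈ Finset.Nat.antidiagonalTuple (2 * a) N,
      (-1 : ℤ) ^ (∑ i : Fin (2 * a), (i.val + 1) * m i) *
        (Nat.multinomial Finset.univ m : ℤ) *
        (((∑ i : Fin (2 * a), (i.val + 1) * m i) + 2 * a + (N+1)).choose
            ((∑ i : Fin (2 * a), (i.val + 1) * m i) + 2 * a + 1) : ℤ)
      = ∑ m ∈ Finset.Nat.antidiagonalTuple (2 * a) N,
          (((Nat.multinomial Finset.univ m : Polynomial ℤ)) *
            (∏ i : Fin (2*a), ((-(1 + X : Polynomial ℤ))^(i.val+1))^(m i))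
            * (1 + X)^(2*a + (N+1))).coeff N := by
      refine Finset.sum_congr rfl fun m _ => ?_
      set w := ∑ i : Fin (2 * a), (i.val + 1) * m i with hw
      have hprod : ((Nat.multinomial Finset.univ m : Polynomial ℤ)) *
            (∏ i : Fin (2*a), ((-(1 + X : Polynomial ℤ))^(i.val+1))^(m i))
            * (1 + X)^(2*a + (N+1))
          = C ((-1 : ℤ)^w * (Nat.multinomial Finset.univ m : ℤ)) * (1+X)^(w + (2*a + (N+1))) := by
        simp_rw [← pow_mul]
        rw [Finset.prod_pow_eq_pow_sum, ← hw, neg_pow]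
        simp only [map_mul, map_pow, map_neg, map_one, Polynomial.C_eq_natCast]
        push_cast [pow_add]
        ring
      rw [hprod, coeff_C_mul, coeff_one_add_X_pow]
      have hsym : (w + 2*a + (N+1)).choose (w + 2*a + 1) = (w + (2*a + (N+1))).choose N := by
        rw [show w + (2*a + (N+1)) = w + 2*a + (N+1) by ring]
        rw [← Nat.choose_symm (by omega : w + 2*a + 1 ≤ w + 2*a + (N+1))]
        congr 1
        omega
      rw [← hsym]
    _ = ((∑ i : Fin (2*a), (-(1 + X : Polynomial ℤ))^(i.val+1))^N * (1 + X)^(2*a + (N+1))).coeff N := by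
      have hmt := Finset.sum_pow_eq_sum_piAntidiag (univ : Finset (Fin (2*a)))
        (fun i : Fin (2*a) => (-(1 + X : Polynomial ℤ))^(i.val+1)) N
      rw [Finset.piAntidiag_univ_fin_eq_antidiagonalTuple] at hmt
      rw [← Polynomial.finset_sum_coeff, ← Finset.sum_mul, ← hmt]
    _ = (a : ℤ) ^ N := by
      have hS : (∑ i : Fin (2*a), (-(1 + X : Polynomial ℤ))^(i.val+1))
          = X * ∑ j ∈ Finset.range a, (1 + X)^(2*j+1) := by
        rw [← Finset.sum_range (fun i => (-(1 + X : Polynomial ℤ))^(i+1)), geo_aux]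
      rw [hS, mul_pow, mul_assoc]
      have hc := Polynomial.coeff_X_pow_mul
        ((∑ j ∈ Finset.range a, (1 + X : Polynomial ℤ)^(2*j+1))^N * (1 + X)^(2*a + (N+1))) N 0
      rw [zero_add] at hc
      rw [hc, Polynomial.coeff_zero_eq_eval_zero]
      simp [Polynomial.eval_finset_sum]
end

section
/- For all integers n ≥ 1, a ≥ 1 and every natural number x: ∑ over all tuples (m_1, …, m_{2a}) of non-negative integers with m_1 + ⋯ + m_{2a} = n of (−1)^{|λ|} · M(n; m_1, …, m_{2a}) · C(|λ|+n+x, n−1) equals 0, where |λ| = m_1 + 2m_2 + ⋯ + 2a·m_{2a}. -/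
open Finset Polynomial

private lemma sum_neg_one_pow_two_mul (a : ℕ) :
    ∑ i ∈ Finset.range (2 * a), (-1 : ℤ) ^ i = 0 := by
  induction a with
  | zero => simp
  | succ a ih =>
    rw [Nat.mul_succ, Finset.sum_range_succ, Finset.sum_range_succ, ih]
    simp [pow_succ]

/-- Claim 1 in the proof of the third Geode conjecture: for integers `n ≥ 1`,
`a ≥ 1` and every natural number `x`, summing over all tuples `(m_1, …, m_{2a})`
of non-negative integers with `m_1 + ⋯ + m_{2a} = n`,
`∑ (−1)^{|λ|} · M(n; m_1,…,m_{2a}) · C(|λ|+n+x, n−1) = 0`,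
where `|λ| = m_1 + 2m_2 + ⋯ + 2a·m_{2a}`. -/
theorem stmt_14 (n a : ℕ) (hn : 1 ≤ n) (ha : 1 ≤ a) (x : ℕ) :
    ∑ m ∈ Finset.Nat.antidiagonalTuple (2 * a) n,
      (-1 : ℤ) ^ (∑ i : Fin (2 * a), (i.val + 1) * m i) *
        (Nat.multinomial Finset.univ m : ℤ) *
        (((∑ i : Fin (2 * a), (i.val + 1) * m i) + n + x).choose (n - 1) : ℤ)
      = 0 := by
  set P : ℤ[X] := ∑ i : Fin (2 * a), (-(1 + X)) ^ (i.val + 1) with hP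
  -- the sum is a coefficient of a polynomial
  have key : (∑ m ∈ Finset.Nat.antidiagonalTuple (2 * a) n,
      (-1 : ℤ) ^ (∑ i : Fin (2 * a), (i.val + 1) * m i) *
        (Nat.multinomial Finset.univ m : ℤ) *
        (((∑ i : Fin (2 * a), (i.val + 1) * m i) + n + x).choose (n - 1) : ℤ))
      = ((1 + X) ^ (n + x) * P ^ n).coeff (n - 1) := by
    rw [hP, Finset.sum_pow_eq_sum_piAntidiag, Finset.piAntidiag_univ_fin_eq_antidiagonalTuple,
      Finset.mul_sum, Polynomial.finset_sum_coeff]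
    refine Finset.sum_congr rfl fun m _ => ?_
    have hprod : ∏ i : Fin (2 * a), ((-(1 + X : ℤ[X])) ^ (i.val + 1)) ^ m i
        = (-1 : ℤ[X]) ^ (∑ i : Fin (2 * a), (i.val + 1) * m i)
          * (1 + X) ^ (∑ i : Fin (2 * a), (i.val + 1) * m i) := by
      rw [← Finset.prod_pow_eq_pow_sum, ← Finset.prod_pow_eq_pow_sum,
        ← Finset.prod_mul_distrib]
      refine Finset.prod_congr rfl fun i _ => ?_
      rw [← pow_mul, neg_pow]
    rw [hprod]
    set s := ∑ i : Fin (2 * a), (i.val + 1) * m i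
    have : (1 + X : ℤ[X]) ^ (n + x) * ((Nat.multinomial Finset.univ m : ℤ[X]) *
        ((-1 : ℤ[X]) ^ s * (1 + X) ^ s))
        = ((-1 : ℤ) ^ s * (Nat.multinomial Finset.univ m : ℤ)) • ((1 + X : ℤ[X]) ^ (s + n + x)) := by
      push_cast
      rw [zsmul_eq_mul]
      push_cast
      ring
    rw [this, Polynomial.coeff_smul, Polynomial.coeff_one_add_X_pow]
    simp [mul_assoc]
  rw [key]
  -- X divides P
  have hXP : X ∣ P := by
    rw [Polynomial.X_dvd_iff, hP, Polynomial.finset_sum_coeff]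
    have : ∀ i : Fin (2 * a), ((-(1 + X : ℤ[X])) ^ (i.val + 1)).coeff 0 = (-1 : ℤ) ^ (i.val + 1) := by
      intro i
      rw [Polynomial.coeff_zero_eq_eval_zero]
      simp
    rw [Finset.sum_congr rfl fun i _ => this i,
      Fin.sum_univ_eq_sum_range (fun k => (-1 : ℤ) ^ (k + 1))]
    have : ∑ i ∈ Finset.range (2 * a), (-1 : ℤ) ^ (i + 1)
        = -∑ i ∈ Finset.range (2 * a), (-1 : ℤ) ^ i := by
      rw [← Finset.sum_neg_distrib]
      exact Finset.sum_congr rfl fun i _ => by rw [pow_succ, mul_neg_one]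
    rw [this, sum_neg_one_pow_two_mul, neg_zero]
  have hdvd : (X : ℤ[X]) ^ n ∣ (1 + X) ^ (n + x) * P ^ n :=
    Dvd.dvd.mul_left (pow_dvd_pow_of_dvd hXP n) _
  exact (Polynomial.X_pow_dvd_iff.mp hdvd) (n - 1) (Nat.sub_lt hn one_pos)
end

section
/- For all integers n ≥ 1, a ≥ 1 and every natural number x: ∑ over all tuples (m_1, …, m_{2a}) of non-negative integers with m_1 + ⋯ + m_{2a} = n−1 of (−1)^{|λ|} · M(n−1; m_1, …, m_{2a}) · C(|λ|+n+x, n−1) equals a^{n−1}, where |λ| = m_1 + 2m_2 + ⋯ + 2a·m_{2a}. -/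
open Finset

open Polynomial in
lemma stmt_15_pair (a : ℕ) :
    (∑ i : Fin (2 * a), (-(1 + X : ℤ[X])) ^ (i.val + 1)) =
      X * ∑ i : Fin a, (1 + X : ℤ[X]) ^ (2 * i.val + 1) := by
  rw [Fin.sum_univ_eq_sum_range (fun j => (-(1 + X : ℤ[X])) ^ (j + 1)),
    Fin.sum_univ_eq_sum_range (fun j => (1 + X : ℤ[X]) ^ (2 * j + 1))]
  induction a with
  | zero => simp
  | succ a ih =>
    have h2 : 2 * (a + 1) = (2 * a + 1) + 1 := by ring
    rw [h2, Finset.sum_range_succ, Finset.sum_range_succ, Finset.sum_range_succ, ih]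
    have hodd : (-(1 + X : ℤ[X])) ^ (2 * a + 1) = -((1 + X) ^ (2 * a + 1)) :=
      Odd.neg_pow ⟨a, by ring⟩ _
    have heven : (-(1 + X : ℤ[X])) ^ (2 * a + 1 + 1) = (1 + X) ^ (2 * a + 1 + 1) :=
      Even.neg_pow ⟨a + 1, by ring⟩ _
    rw [hodd, heven]
    ring

/-- Claim 2 in the proof of the third Geode conjecture: for integers `n ≥ 1`,
`a ≥ 1` and every natural number `x`, summing over all tuples `(m_1, …, m_{2a})`
of non-negative integers with `m_1 + ⋯ + m_{2a} = n−1`,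
`∑ (−1)^{|λ|} · M(n−1; m_1,…,m_{2a}) · C(|λ|+n+x, n−1) = a^{n−1}`,
where `|λ| = m_1 + 2m_2 + ⋯ + 2a·m_{2a}`. -/
theorem stmt_15 (n a : ℕ) (hn : 1 ≤ n) (ha : 1 ≤ a) (x : ℕ) :
    ∑ m ∈ Finset.Nat.antidiagonalTuple (2 * a) (n - 1),
      (-1 : ℤ) ^ (∑ i : Fin (2 * a), (i.val + 1) * m i) *
        (Nat.multinomial Finset.univ m : ℤ) *
        (((∑ i : Fin (2 * a), (i.val + 1) * m i) + n + x).choose (n - 1) : ℤ)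
      = (a : ℤ) ^ (n - 1) := by
  open Polynomial in
  set P : ℤ[X] :=
    (∑ i : Fin (2 * a), (-(1 + X : ℤ[X])) ^ (i.val + 1)) ^ (n - 1) * (1 + X) ^ (n + x) with hP
  have hcoeff : P.coeff (n - 1) =
      ∑ m ∈ Finset.Nat.antidiagonalTuple (2 * a) (n - 1),
        (-1 : ℤ) ^ (∑ i : Fin (2 * a), (i.val + 1) * m i) *
          (Nat.multinomial Finset.univ m : ℤ) *
          (((∑ i : Fin (2 * a), (i.val + 1) * m i) + n + x).choose (n - 1) : ℤ) := by
    rw [hP, Finset.sum_pow_eq_sum_piAntidiag,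
      Finset.piAntidiag_univ_fin_eq_antidiagonalTuple, Finset.sum_mul,
      Polynomial.finset_sum_coeff]
    refine Finset.sum_congr rfl fun m hm => ?_
    have hprod : (∏ i : Fin (2 * a), ((-(1 + X : ℤ[X])) ^ (i.val + 1)) ^ m i) =
        (-1 : ℤ[X]) ^ (∑ i : Fin (2 * a), (i.val + 1) * m i) *
          (1 + X) ^ (∑ i : Fin (2 * a), (i.val + 1) * m i) := by
      rw [← neg_one_mul (1 + X : ℤ[X]), ← mul_pow, ← Finset.prod_pow_eq_pow_sum]
      exact Finset.prod_congr rfl fun i _ => by rw [← pow_mul]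
    rw [hprod]
    set k := ∑ i : Fin (2 * a), (i.val + 1) * m i with hk
    have : (Nat.multinomial Finset.univ m : ℤ[X]) *
          ((-1 : ℤ[X]) ^ k * (1 + X) ^ k) * (1 + X) ^ (n + x)
        = Polynomial.C ((-1 : ℤ) ^ k * (Nat.multinomial Finset.univ m : ℤ)) *
          (X + 1) ^ (k + n + x) := by
      rw [map_mul, map_pow, map_neg, map_one, Polynomial.C_eq_natCast]
      ring
    rw [this, Polynomial.coeff_C_mul, Polynomial.coeff_X_add_one_pow]
  rw [← hcoeff]
  rw [hP, stmt_15_pair, mul_pow, mul_assoc]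
  have h0 := Polynomial.coeff_X_pow_mul
    ((∑ i : Fin a, (1 + X : ℤ[X]) ^ (2 * i.val + 1)) ^ (n - 1) * (1 + X) ^ (n + x)) (n - 1) 0
  rw [zero_add] at h0
  rw [h0, Polynomial.coeff_zero_eq_eval_zero]
  simp [Polynomial.eval_finset_sum]
end

section
/- Fix integers n ≥ 1, a ≥ 1 and a natural number x. Let q ∈ ℚ[z] be the (unique) polynomial satisfying (2 + z)·q(z) = 1 − (1+z)^{2a}. Then the coefficient of z^{n−1} in the polynomial (−1)^{n−1} · (1+z)^{2n+x−1} · q(z)^{n−1} equals a^{n−1}. -/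
open Polynomial

/-- The final constant-term evaluation in the proof of Claim 2: fix integers
`n ≥ 1`, `a ≥ 1` and a natural number `x`; let `q ∈ ℚ[z]` be the (unique)
polynomial with `(2 + z)·q(z) = 1 − (1+z)^{2a}`. Then the coefficient of
`z^{n−1}` in `(−1)^{n−1} · (1+z)^{2n+x−1} · q(z)^{n−1}` equals `a^{n−1}`. -/
theorem stmt_16 (n a : ℕ) (hn : 1 ≤ n) (ha : 1 ≤ a) (x : ℕ)
    (q : Polynomial ℚ)
    (hq : (C 2 + X) * q = 1 - (1 + X) ^ (2 * a)) :
    ((-1 : Polynomial ℚ) ^ (n - 1) * (1 + X) ^ (2 * n + x - 1) * q ^ (n - 1)).coeff (n - 1)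
      = (a : ℚ) ^ (n - 1) := by
  have h0 : q.coeff 0 = 0 := by
    have h := congrArg (fun p => Polynomial.coeff p 0) hq
    simp [mul_coeff_zero, coeff_one_add_X_pow] at h
    linarith
  have h1 : q.coeff 1 = -a := by
    have h := congrArg (fun p => Polynomial.coeff p 1) hq
    have hexp : (C (2:ℚ) + X) * q = C 2 * q + X * q := by ring
    rw [hexp] at h
    simp [coeff_one, coeff_one_add_X_pow, h0, Nat.choose_one_right] at h
    linarith
  have hxm : q = X * q.divX := by
    conv_lhs => rw [← X_mul_divX_add q, h0]
    simp
  set m := n - 1 with hm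
  rw [hxm, mul_pow, show (-1 : Polynomial ℚ) ^ m * (1 + X) ^ (2 * n + x - 1) *
      (X ^ m * q.divX ^ m) = X ^ m * ((-1 : Polynomial ℚ) ^ m * (1 + X) ^ (2 * n + x - 1)
      * q.divX ^ m) by ring]
  have := coeff_X_pow_mul ((-1 : Polynomial ℚ) ^ m * (1 + X) ^ (2 * n + x - 1)
      * q.divX ^ m) m 0
  rw [zero_add] at this
  rw [this, coeff_zero_eq_eval_zero]
  have hdiv : (q.divX).eval 0 = -a := by
    rw [← coeff_zero_eq_eval_zero, coeff_divX, h1]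
  simp [hdiv]
  rw [← mul_pow]
  ring_nf
end

section
/- Define, for non-negative integers m1, m2, the rational numbers C[m1,m2] = (1+2m1+3m2)! / [ (1+2m1+3m2) · m1! · m2! · (1+m1+2m2)! ] and G[m1,m2] = (2m1+3m2+3)! / [ (2m1+2m2+3) · (m1+m2+1) · (m1+2m2+2)! · m1! · m2! ]. Then for all integers m1 ≥ 1 and m2 ≥ 1, G[m1−1, m2] + G[m1, m2−1] = C[m1, m2]. -/
open Nat

/-- With `C[m1,m2] = (1+2m1+3m2)! / [(1+2m1+3m2)·m1!·m2!·(1+m1+2m2)!]` (the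
hyper-Catalan numbers) and
`G[m1,m2] = (2m1+3m2+3)! / [(2m1+2m2+3)·(m1+m2+1)·(m1+2m2+2)!·m1!·m2!]` (the
Geode coefficients), for all integers `m1 ≥ 1`, `m2 ≥ 1` we have
`G[m1−1, m2] + G[m1, m2−1] = C[m1, m2]`. -/
theorem stmt_17 (Cat G : ℕ → ℕ → ℚ)
    (hCat : ∀ m1 m2 : ℕ, Cat m1 m2 =
      ((1 + 2 * m1 + 3 * m2)! : ℚ) /
        ((1 + 2 * m1 + 3 * m2 : ℕ) * (m1 ! : ℚ) * (m2 ! : ℚ) * ((1 + m1 + 2 * m2)! : ℚ)))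
    (hG : ∀ m1 m2 : ℕ, G m1 m2 =
      ((2 * m1 + 3 * m2 + 3)! : ℚ) /
        ((2 * m1 + 2 * m2 + 3 : ℕ) * (m1 + m2 + 1 : ℕ) * ((m1 + 2 * m2 + 2)! : ℚ) *
          (m1 ! : ℚ) * (m2 ! : ℚ)))
    (m1 m2 : ℕ) (hm1 : 1 ≤ m1) (hm2 : 1 ≤ m2) :
    G (m1 - 1) m2 + G m1 (m2 - 1) = Cat m1 m2 := by
  obtain ⟨a, rfl⟩ : ∃ a, m1 = a + 1 := ⟨m1 - 1, (Nat.succ_pred_eq_of_pos hm1).symm⟩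
  obtain ⟨b, rfl⟩ : ∃ b, m2 = b + 1 := ⟨m2 - 1, (Nat.succ_pred_eq_of_pos hm2).symm⟩
  simp only [Nat.add_sub_cancel]
  rw [hCat, hG, hG]
  have e1 : 1 + 2 * (a + 1) + 3 * (b + 1) = (2 * a + 3 * b + 5) + 1 := by ring
  have e2 : 2 * a + 3 * (b + 1) + 3 = (2 * a + 3 * b + 5) + 1 := by ring
  have e3 : 2 * (a + 1) + 3 * b + 3 = 2 * a + 3 * b + 5 := by ring
  have e4 : 1 + (a + 1) + 2 * (b + 1) = (a + 2 * b + 3) + 1 := by ring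
  have e5 : a + 2 * (b + 1) + 2 = (a + 2 * b + 3) + 1 := by ring
  have e6 : (a + 1) + 2 * b + 2 = a + 2 * b + 3 := by ring
  have e7 : 2 * a + 2 * (b + 1) + 3 = 2 * a + 2 * b + 5 := by ring
  have e8 : 2 * (a + 1) + 2 * b + 3 = 2 * a + 2 * b + 5 := by ring
  have e9 : a + (b + 1) + 1 = a + b + 2 := by ring
  have e10 : (a + 1) + b + 1 = a + b + 2 := by ring
  rw [e1, e2, e3, e4, e5, e6, e7, e8, e9, e10,
    Nat.factorial_succ (2 * a + 3 * b + 5), Nat.factorial_succ (a + 2 * b + 3),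
    Nat.factorial_succ a, Nat.factorial_succ b]
  have hfa : (a ! : ℚ) ≠ 0 := by exact_mod_cast (Nat.factorial_pos a).ne'
  have hfb : (b ! : ℚ) ≠ 0 := by exact_mod_cast (Nat.factorial_pos b).ne'
  have hf1 : ((2 * a + 3 * b + 5)! : ℚ) ≠ 0 := by
    exact_mod_cast (Nat.factorial_pos _).ne'
  have hf2 : ((a + 2 * b + 3)! : ℚ) ≠ 0 := by
    exact_mod_cast (Nat.factorial_pos _).ne'
  have h1 : ((2 * a + 3 * b + 5 + 1 : ℕ) : ℚ) ≠ 0 := by positivity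
  have h2 : ((a + 2 * b + 3 + 1 : ℕ) : ℚ) ≠ 0 := by positivity
  have h3 : ((2 * a + 2 * b + 5 : ℕ) : ℚ) ≠ 0 := by positivity
  have h4 : ((a + b + 2 : ℕ) : ℚ) ≠ 0 := by positivity
  have h5 : ((a : ℚ) + 1) ≠ 0 := by positivity
  have h6 : ((b : ℚ) + 1) ≠ 0 := by positivity
  push_cast
  field_simp
  ring
end
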